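/- Let a > b > 0 be real numbers. Then the function x ↦ ϑ_a(x)/ϑ_b(x) is continuous and strictly increasing on ℝ, tends to 1 as x → −∞, and tends to a²/b² as x → +∞. Moreover, if p ≥ q > 0 are real numbers with p/q ≤ a²/b², then every x ∈ ℝ satisfying q·ϑ_a(x) = p·ϑ_b(x) satisfies 4pq(p−q)(a²q − b²p)·x² = (a²q² − b²p²)². -/

import Mathlib

/-- `ϑ_a(x) = √(x² + a²) − x`. -/
noncomputable def theta (a x : ℝ) : ℝ := Real.sqrt (x ^ 2 + a ^ 2) - x

lemma sqrt_sq_aux (c x : ℝ) : Real.sqrt (x ^ 2 + c ^ 2) ^ 2 = x ^ 2 + c ^ 2 :=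
  Real.sq_sqrt (by positivity)

lemma abs_lt_sqrt_aux (c x : ℝ) (hc : 0 < c) : |x| < Real.sqrt (x ^ 2 + c ^ 2) := by
  rw [← Real.sqrt_sq_eq_abs]
  exact Real.sqrt_lt_sqrt (sq_nonneg x) (by nlinarith)

lemma theta_pos (c x : ℝ) (hc : 0 < c) : 0 < theta c x := by
  have h := abs_lt_sqrt_aux c x hc
  have := le_abs_self x
  unfold theta; linarith

lemma sqrt_add_pos (c x : ℝ) (hc : 0 < c) : 0 < Real.sqrt (x ^ 2 + c ^ 2) + x := by
  have h := abs_lt_sqrt_aux c x hc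
  have := neg_abs_le x
  linarith

lemma theta_eq (c x : ℝ) (hc : 0 < c) :
    theta c x = c ^ 2 / (Real.sqrt (x ^ 2 + c ^ 2) + x) := by
  rw [eq_div_iff (ne_of_gt (sqrt_add_pos c x hc))]
  unfold theta
  linear_combination sqrt_sq_aux c x

lemma hasDerivAt_theta (c : ℝ) (hc : 0 < c) (x : ℝ) :
    HasDerivAt (theta c) (x / Real.sqrt (x ^ 2 + c ^ 2) - 1) x := by
  have hs : 0 < Real.sqrt (x ^ 2 + c ^ 2) := Real.sqrt_pos.mpr (by positivity)
  have h1 : HasDerivAt (fun y : ℝ => y ^ 2 + c ^ 2) (2 * x) x := by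
    simpa using (hasDerivAt_pow 2 x).add_const (c ^ 2)
  have h2 : HasDerivAt (fun y : ℝ => Real.sqrt (y ^ 2 + c ^ 2))
      (1 / (2 * Real.sqrt (x ^ 2 + c ^ 2)) * (2 * x)) x :=
    (Real.hasDerivAt_sqrt (by positivity)).comp x h1
  have h3 := h2.sub (hasDerivAt_id x)
  refine h3.congr_deriv ?_
  ring

/-- For `a > b > 0`: the function `x ↦ ϑ_a(x)/ϑ_b(x)` is continuous and strictly
increasing on `ℝ`, tends to `1` as `x → −∞` and to `a²/b²` as `x → +∞`; moreover, if
`p ≥ q > 0` with `p/q ≤ a²/b²`, then every real `x` with `q·ϑ_a(x) = p·ϑ_b(x)`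
satisfies `4pq(p−q)(a²q − b²p)·x² = (a²q² − b²p²)²`. -/
theorem theta_ratio_properties (a b : ℝ) (hb : 0 < b) (hab : b < a) :
    Continuous (fun x : ℝ => theta a x / theta b x) ∧
    StrictMono (fun x : ℝ => theta a x / theta b x) ∧
    Filter.Tendsto (fun x : ℝ => theta a x / theta b x) Filter.atBot (nhds 1) ∧
    Filter.Tendsto (fun x : ℝ => theta a x / theta b x) Filter.atTop
      (nhds (a ^ 2 / b ^ 2)) ∧
    ∀ p q : ℝ, 0 < q → q ≤ p → p / q ≤ a ^ 2 / b ^ 2 →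
      ∀ x : ℝ, q * theta a x = p * theta b x →
        4 * p * q * (p - q) * (a ^ 2 * q - b ^ 2 * p) * x ^ 2 =
          (a ^ 2 * q ^ 2 - b ^ 2 * p ^ 2) ^ 2 := by
  have ha : 0 < a := hb.trans hab
  have hctheta : ∀ c : ℝ, Continuous (theta c) := by
    intro c
    unfold theta
    exact (Real.continuous_sqrt.comp (by continuity)).sub continuous_id
  have hsa : ∀ x : ℝ, 0 < Real.sqrt (x ^ 2 + a ^ 2) := fun x =>
    Real.sqrt_pos.mpr (by positivity)
  have hsb : ∀ x : ℝ, 0 < Real.sqrt (x ^ 2 + b ^ 2) := fun x =>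
    Real.sqrt_pos.mpr (by positivity)
  have hsba : ∀ x : ℝ, Real.sqrt (x ^ 2 + b ^ 2) < Real.sqrt (x ^ 2 + a ^ 2) := fun x =>
    Real.sqrt_lt_sqrt (by positivity) (by nlinarith)
  -- continuity
  have hcont : Continuous (fun x : ℝ => theta a x / theta b x) :=
    (hctheta a).div (hctheta b) (fun x => ne_of_gt (theta_pos b x hb))
  refine ⟨hcont, ?_, ?_, ?_, ?_⟩
  · -- strict monotonicity via positive derivative
    apply strictMono_of_deriv_pos
    intro x
    set sa := Real.sqrt (x ^ 2 + a ^ 2) with hsa'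
    set sb := Real.sqrt (x ^ 2 + b ^ 2) with hsb'
    have hda := hasDerivAt_theta a ha x
    have hdb := hasDerivAt_theta b hb x
    have hθb : 0 < theta b x := theta_pos b x hb
    have hθa : 0 < theta a x := theta_pos a x ha
    have hd := hda.div hdb (ne_of_gt hθb)
    rw [show deriv (fun x => theta a x / theta b x) x = _ from hd.deriv]
    have h1 : 0 < sa := hsa x
    have h2 : 0 < sb := hsb x
    have h3 : sb < sa := hsba x
    have hθa' : theta a x = sa - x := rfl
    have hθb' : theta b x = sb - x := rfl
    apply div_pos _ (by positivity)
    rw [hθa', hθb']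
    have key : (x / sa - 1) * (sb - x) - (sa - x) * (x / sb - 1)
        = (sa - x) * (sb - x) * (sa - sb) / (sa * sb) := by
      field_simp
      ring
    rw [key]
    have h4 : 0 < sa - x := by rw [← hθa']; exact hθa
    have h5 : 0 < sb - x := by rw [← hθb']; exact hθb
    exact div_pos (mul_pos (mul_pos h4 h5) (sub_pos.mpr h3)) (mul_pos h1 h2)
  · -- limit at −∞
    have heq : ∀ x : ℝ, theta a x / theta b x
        = 1 + (Real.sqrt (x ^ 2 + a ^ 2) - Real.sqrt (x ^ 2 + b ^ 2)) / theta b x := by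
      intro x
      have hθb : 0 < theta b x := theta_pos b x hb
      unfold theta at *
      field_simp
      ring
    have hdiff : ∀ x : ℝ, Real.sqrt (x ^ 2 + a ^ 2) - Real.sqrt (x ^ 2 + b ^ 2)
        = (a ^ 2 - b ^ 2) / (Real.sqrt (x ^ 2 + a ^ 2) + Real.sqrt (x ^ 2 + b ^ 2)) := by
      intro x
      have h1 := hsa x
      have h2 := hsb x
      rw [eq_div_iff (by positivity)]
      linear_combination sqrt_sq_aux a x - sqrt_sq_aux b x
    have hsum_top : Filter.Tendsto
        (fun x : ℝ => Real.sqrt (x ^ 2 + a ^ 2) + Real.sqrt (x ^ 2 + b ^ 2))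
        Filter.atBot Filter.atTop := by
      apply Filter.tendsto_atTop_mono (f := fun x : ℝ => -x)
      · intro x
        have h := abs_lt_sqrt_aux a x ha
        have h2 := (hsb x).le
        have := neg_abs_le x
        linarith
      · exact Filter.tendsto_neg_atBot_atTop
    have hdiff0 : Filter.Tendsto
        (fun x : ℝ => Real.sqrt (x ^ 2 + a ^ 2) - Real.sqrt (x ^ 2 + b ^ 2))
        Filter.atBot (nhds 0) := by
      simp only [hdiff]
      exact Filter.Tendsto.div_atTop tendsto_const_nhds hsum_top
    have hθb_top : Filter.Tendsto (fun x : ℝ => theta b x) Filter.atBot Filter.atTop := by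
      apply Filter.tendsto_atTop_mono (f := fun x : ℝ => -x)
      · intro x
        have h := (hsb x).le
        unfold theta
        linarith
      · exact Filter.tendsto_neg_atBot_atTop
    have : Filter.Tendsto (fun x : ℝ =>
        1 + (Real.sqrt (x ^ 2 + a ^ 2) - Real.sqrt (x ^ 2 + b ^ 2)) / theta b x)
        Filter.atBot (nhds (1 + 0)) :=
      Filter.Tendsto.add tendsto_const_nhds (Filter.Tendsto.div_atTop hdiff0 hθb_top)
    simpa [heq] using this.congr (fun x => (heq x).symm)
  · -- limit at +∞
    have heq : ∀ x : ℝ, theta a x / theta b x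
        = a ^ 2 / b ^ 2 * (1 - (Real.sqrt (x ^ 2 + a ^ 2) - Real.sqrt (x ^ 2 + b ^ 2)) /
            (Real.sqrt (x ^ 2 + a ^ 2) + x)) := by
      intro x
      rw [theta_eq a x ha, theta_eq b x hb]
      have h1 := sqrt_add_pos a x ha
      have h2 := sqrt_add_pos b x hb
      field_simp
      ring
    have hdiff : ∀ x : ℝ, Real.sqrt (x ^ 2 + a ^ 2) - Real.sqrt (x ^ 2 + b ^ 2)
        = (a ^ 2 - b ^ 2) / (Real.sqrt (x ^ 2 + a ^ 2) + Real.sqrt (x ^ 2 + b ^ 2)) := by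
      intro x
      have h1 := hsa x
      have h2 := hsb x
      rw [eq_div_iff (by positivity)]
      linear_combination sqrt_sq_aux a x - sqrt_sq_aux b x
    have hsum_top : Filter.Tendsto
        (fun x : ℝ => Real.sqrt (x ^ 2 + a ^ 2) + Real.sqrt (x ^ 2 + b ^ 2))
        Filter.atTop Filter.atTop := by
      apply Filter.tendsto_atTop_mono (f := fun x : ℝ => x)
      · intro x
        have h := abs_lt_sqrt_aux a x ha
        have h2 := (hsb x).le
        have := le_abs_self x
        linarith
      · exact Filter.tendsto_id
    have hdiff0 : Filter.Tendsto
        (fun x : ℝ => Real.sqrt (x ^ 2 + a ^ 2) - Real.sqrt (x ^ 2 + b ^ 2))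
        Filter.atTop (nhds 0) := by
      simp only [hdiff]
      exact Filter.Tendsto.div_atTop tendsto_const_nhds hsum_top
    have hden_top : Filter.Tendsto (fun x : ℝ => Real.sqrt (x ^ 2 + a ^ 2) + x)
        Filter.atTop Filter.atTop := by
      apply Filter.tendsto_atTop_mono (f := fun x : ℝ => x)
      · intro x
        have h := (hsa x).le
        linarith
      · exact Filter.tendsto_id
    have : Filter.Tendsto (fun x : ℝ => a ^ 2 / b ^ 2 *
        (1 - (Real.sqrt (x ^ 2 + a ^ 2) - Real.sqrt (x ^ 2 + b ^ 2)) /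
          (Real.sqrt (x ^ 2 + a ^ 2) + x)))
        Filter.atTop (nhds (a ^ 2 / b ^ 2 * (1 - 0))) :=
      Filter.Tendsto.const_mul _ (Filter.Tendsto.sub tendsto_const_nhds
        (Filter.Tendsto.div_atTop hdiff0 hden_top))
    simpa using this.congr (fun x => (heq x).symm)
  · -- the algebraic identity
    intro p q hq hqp hpq x h
    set s := Real.sqrt (x ^ 2 + a ^ 2) with hs'
    set t := Real.sqrt (x ^ 2 + b ^ 2) with ht'
    have hs : s ^ 2 = x ^ 2 + a ^ 2 := sqrt_sq_aux a x
    have ht : t ^ 2 = x ^ 2 + b ^ 2 := sqrt_sq_aux b x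
    have h' : q * s - p * t = (q - p) * x := by
      unfold theta at h; ring_nf; ring_nf at h; linarith
    have h1 : (q * s - p * t) ^ 2 = ((q - p) * x) ^ 2 := by rw [h']
    have h2 : 2 * p * q * (s * t) = 2 * p * q * x ^ 2 + a ^ 2 * q ^ 2 + b ^ 2 * p ^ 2 := by
      linear_combination q ^ 2 * hs + p ^ 2 * ht - h1
    have h3 : (2 * p * q * (s * t)) ^ 2
        = (2 * p * q * x ^ 2 + a ^ 2 * q ^ 2 + b ^ 2 * p ^ 2) ^ 2 := by rw [h2]
    have h4 : (s * t) ^ 2 = (x ^ 2 + a ^ 2) * (x ^ 2 + b ^ 2) := by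
      rw [mul_pow, hs, ht]
    linear_combination h3 - 4 * p ^ 2 * q ^ 2 * h4
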